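/- arXiv:2207.12289 — 4 statements merged into one kernel-verified Lean document; each statement's English description precedes it below -/
import Mathlib

section
/- Let u: U → R be L-Lipschitz on an open set U ⊂ R^d with u = 0 on ∂U (extended by 0), let d(x) = dist(x, R^d \ U), let t > 0, and let φ: R → [0,1] be the piecewise linear function with φ(s)=0 for s ≤ 1, φ(s)=1 for s ≥ 2, |φ'| ≤ 2. Define ū(x) = φ(d(x)/t) ξ_t(x) + (1 − φ(d(x)/t)) u(x), where ξ_t(x) = ⨍_{B_t(x)} u. Then ‖u − ū‖_{L^∞(U)} ≤ L t and ū is Lipschitz on U with constant at most 4L (in particular ‖∇ū‖_{L^∞(U)} ≤ 4L almost everywhere). -/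
open MeasureTheory Metric

/-- A function Lipschitz on an open set, vanishing outside it, and globally continuous
is globally Lipschitz with the same constant. -/
theorem aux_glip {E : Type*} [NormedAddCommGroup E] [NormedSpace ℝ E]
    {L : ℝ} (hL : 0 ≤ L) {U : Set E} (hUo : IsOpen U)
    {u : E → ℝ}
    (hu : ∀ x ∈ U, ∀ y ∈ U, |u x - u y| ≤ L * ‖x - y‖)
    (hu0 : ∀ x ∉ U, u x = 0)
    (hucont : Continuous u) :
    ∀ x y, |u x - u y| ≤ L * ‖x - y‖ := by
  have key : ∀ x ∈ U, ∀ y ∉ U, |u x - u y| ≤ L * ‖x - y‖ := by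
    intro x hx y hy
    set f : ℝ → E := fun s => x + s • (y - x) with hf
    have hfc : Continuous f := by fun_prop
    set T : Set ℝ := Set.Icc (0:ℝ) 1 ∩ f ⁻¹' Uᶜ with hT
    have h1T : (1:ℝ) ∈ T := by
      constructor
      · exact ⟨zero_le_one, le_refl 1⟩
      · simp only [Set.mem_preimage, hf, one_smul]
        simpa using hy
    have hTne : T.Nonempty := ⟨1, h1T⟩
    have hTbdd : BddBelow T := ⟨0, fun s hs => hs.1.1⟩
    have hTclosed : IsClosed T :=
      isClosed_Icc.inter (hUo.isClosed_compl.preimage hfc)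
    set s₀ := sInf T with hs₀
    have hs₀T : s₀ ∈ T := hTclosed.csInf_mem hTne hTbdd
    have hs₀nonneg : 0 ≤ s₀ := le_csInf hTne fun s hs => hs.1.1
    have hs₀le1 : s₀ ≤ 1 := csInf_le hTbdd h1T
    have hf0 : f 0 = x := by simp [hf]
    have hs₀pos : 0 < s₀ := by
      rcases hs₀nonneg.lt_or_eq with h | h
      · exact h
      · exfalso
        have : f s₀ ∈ Uᶜ := hs₀T.2
        rw [← h, hf0] at this
        exact this hx
    have hmemU : ∀ s ∈ Set.Ico (0:ℝ) s₀, f s ∈ U := by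
      intro s hs
      by_contra h
      have : s ∈ T := ⟨⟨hs.1, hs.2.le.trans hs₀le1⟩, h⟩
      exact absurd (csInf_le hTbdd this) (not_le.2 hs.2)
    have hbound : ∀ s ∈ Set.Ico (0:ℝ) s₀, |u x - u (f s)| ≤ L * ‖x - y‖ := by
      intro s hs
      have h1 := hu x hx (f s) (hmemU s hs)
      have h2 : ‖x - f s‖ = s * ‖x - y‖ := by
        have : x - f s = (-s) • (y - x) := by simp only [hf]; module
        rw [this, norm_smul, norm_neg, Real.norm_eq_abs, abs_of_nonneg hs.1,
          norm_sub_rev]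
      calc |u x - u (f s)| ≤ L * ‖x - f s‖ := h1
        _ = L * (s * ‖x - y‖) := by rw [h2]
        _ ≤ L * (1 * ‖x - y‖) := by
            gcongr
            exact hs.2.le.trans hs₀le1
        _ = L * ‖x - y‖ := by ring_nf
    have hfy : u (f s₀) = 0 := hu0 _ hs₀T.2
    have hgoal : |u x - u y| = |u x - u (f s₀)| := by rw [hu0 y hy, hfy]
    rw [hgoal]
    have htends : Filter.Tendsto (fun s => |u x - u (f s)|) (nhdsWithin s₀ (Set.Iio s₀))
        (nhds |u x - u (f s₀)|) :=
      ((continuous_const.sub (hucont.comp hfc)).abs.tendsto s₀).mono_left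
        nhdsWithin_le_nhds
    refine le_of_tendsto htends ?_
    filter_upwards [Ioo_mem_nhdsLT_of_mem (⟨hs₀pos, le_refl s₀⟩ : s₀ ∈ Set.Ioc 0 s₀)]
      with s hs
    exact hbound s ⟨hs.1.le, hs.2⟩
  intro x y
  by_cases hx : x ∈ U <;> by_cases hy : y ∈ U
  · exact hu x hx y hy
  · exact key x hx y hy
  · rw [abs_sub_comm, norm_sub_rev]; exact key y hy x hx
  · rw [hu0 x hx, hu0 y hy]
    simpa using mul_nonneg hL (norm_nonneg _)

/-- The ball average of a globally Lipschitz function differs from the center value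
by at most `L * t`. -/
theorem aux_avg (d : ℕ) (L t : ℝ) (hL : 0 ≤ L) (ht : 0 < t)
    (u : EuclideanSpace ℝ (Fin d) → ℝ) (hucont : Continuous u)
    (hglip : ∀ x y, |u x - u y| ≤ L * ‖x - y‖) (y : EuclideanSpace ℝ (Fin d)) :
    |(⨍ z in ball y t, u z) - u y| ≤ L * t := by
  have hfin : volume (ball y t) < ⊤ := measure_ball_lt_top
  have hpos : 0 < volume (ball y t) := measure_ball_pos _ _ ht
  have hc : (0:ℝ) < (volume (ball y t)).toReal := ENNReal.toReal_pos hpos.ne' hfin.ne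
  have hint : IntegrableOn u (ball y t) :=
    (hucont.continuousOn.integrableOn_compact (isCompact_closedBall y t)).mono_set
      ball_subset_closedBall
  have h1 : ∫ z in ball y t, (u z - u y) =
      (∫ z in ball y t, u z) - (volume (ball y t)).toReal * u y := by
    rw [integral_sub hint (integrableOn_const hfin.ne), setIntegral_const,
      smul_eq_mul, measureReal_def]
  have h2 : ‖∫ z in ball y t, (u z - u y)‖ ≤ (L * t) * (volume (ball y t)).toReal := by
    apply norm_setIntegral_le_of_norm_le_const hfin
    · intro z hz
      rw [Real.norm_eq_abs]
      calc |u z - u y| ≤ L * ‖z - y‖ := hglip z y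
        _ ≤ L * t := by
            have : ‖z - y‖ ≤ t := by
              rw [← dist_eq_norm]
              exact (mem_ball.mp hz).le
            exact mul_le_mul_of_nonneg_left this hL
  rw [setAverage_eq, smul_eq_mul, measureReal_def]
  have heq : (volume (ball y t)).toReal⁻¹ * (∫ z in ball y t, u z) - u y =
      (volume (ball y t)).toReal⁻¹ *
        ((∫ z in ball y t, u z) - (volume (ball y t)).toReal * u y) := by
    field_simp
  rw [heq, ← h1, abs_mul, abs_of_nonneg (inv_nonneg.2 hc.le)]
  calc (volume (ball y t)).toReal⁻¹ * |∫ z in ball y t, (u z - u y)| ≤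
      (volume (ball y t)).toReal⁻¹ * ((L * t) * (volume (ball y t)).toReal) := by
        gcongr
        rw [← Real.norm_eq_abs]; exact h2
    _ = L * t := by field_simp

/-- The map `x ↦ ⨍ z in ball x t, u z` is `L`-Lipschitz when `u` is. -/
theorem aux_xi (d : ℕ) (L t : ℝ) (hL : 0 ≤ L) (ht : 0 < t)
    (u : EuclideanSpace ℝ (Fin d) → ℝ) (hucont : Continuous u)
    (hglip : ∀ x y, |u x - u y| ≤ L * ‖x - y‖) (x y : EuclideanSpace ℝ (Fin d)) :
    |(⨍ z in ball x t, u z) - ⨍ z in ball y t, u z| ≤ L * ‖x - y‖ := by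
  have htrans : ∀ c : EuclideanSpace ℝ (Fin d),
      ∫ z in ball c t, u z = ∫ z in ball (0 : EuclideanSpace ℝ (Fin d)) t, u (c + z) := by
    intro c
    have hmp : MeasurePreserving (fun z : EuclideanSpace ℝ (Fin d) => c + z) volume volume :=
      measurePreserving_add_left volume c
    have hemb : MeasurableEmbedding (fun z : EuclideanSpace ℝ (Fin d) => c + z) :=
      (Homeomorph.addLeft c).measurableEmbedding
    have hpre : (fun z : EuclideanSpace ℝ (Fin d) => c + z) ⁻¹' ball c t =
        ball (0 : EuclideanSpace ℝ (Fin d)) t := by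
      ext z
      simp [mem_ball, dist_eq_norm, add_sub_cancel_left]
    rw [← hmp.setIntegral_preimage_emb hemb u (ball c t), hpre]
  have hm : ∀ c : EuclideanSpace ℝ (Fin d),
      volume (ball c t) = volume (ball (0 : EuclideanSpace ℝ (Fin d)) t) := fun c =>
    Measure.addHaar_ball_center volume c t
  have hfin : volume (ball (0 : EuclideanSpace ℝ (Fin d)) t) < ⊤ := measure_ball_lt_top
  have hpos : 0 < volume (ball (0 : EuclideanSpace ℝ (Fin d)) t) := measure_ball_pos _ _ ht
  have hc : (0:ℝ) < (volume (ball (0 : EuclideanSpace ℝ (Fin d)) t)).toReal :=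
    ENNReal.toReal_pos hpos.ne' hfin.ne
  have hint : ∀ c : EuclideanSpace ℝ (Fin d),
      IntegrableOn (fun z => u (c + z)) (ball (0 : EuclideanSpace ℝ (Fin d)) t) :=
    fun c => (((hucont.comp (continuous_const.add continuous_id)).continuousOn).integrableOn_compact
        (isCompact_closedBall _ t)).mono_set ball_subset_closedBall
  have h2 : ‖∫ z in ball (0 : EuclideanSpace ℝ (Fin d)) t, (u (x + z) - u (y + z))‖ ≤
      (L * ‖x - y‖) * (volume (ball (0 : EuclideanSpace ℝ (Fin d)) t)).toReal := by
    apply norm_setIntegral_le_of_norm_le_const hfin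
    · intro z _
      rw [Real.norm_eq_abs]
      calc |u (x + z) - u (y + z)| ≤ L * ‖(x + z) - (y + z)‖ := hglip _ _
        _ = L * ‖x - y‖ := by rw [add_sub_add_right_eq_sub]
  rw [setAverage_eq, setAverage_eq, measureReal_def, measureReal_def, hm x, hm y, htrans x, htrans y, smul_eq_mul, smul_eq_mul,
    ← mul_sub, ← integral_sub (hint x) (hint y), abs_mul, abs_of_nonneg (inv_nonneg.2 hc.le)]
  calc (volume (ball (0 : EuclideanSpace ℝ (Fin d)) t)).toReal⁻¹ *
      |∫ z in ball (0 : EuclideanSpace ℝ (Fin d)) t, (u (x + z) - u (y + z))| ≤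
      (volume (ball (0 : EuclideanSpace ℝ (Fin d)) t)).toReal⁻¹ *
        ((L * ‖x - y‖) * (volume (ball (0 : EuclideanSpace ℝ (Fin d)) t)).toReal) := by
        gcongr
        rw [← Real.norm_eq_abs]; exact h2
    _ = L * ‖x - y‖ := by field_simp

/-- The cutoff `x ↦ φ(d(x)/t)` is `1/t`-Lipschitz. -/
theorem aux_phi (d : ℕ) (t : ℝ) (ht : 0 < t) (U : Set (EuclideanSpace ℝ (Fin d)))
    (x y : EuclideanSpace ℝ (Fin d)) :
    |min 1 (max (Metric.infDist x Uᶜ / t - 1) 0) -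
      min 1 (max (Metric.infDist y Uᶜ / t - 1) 0)| ≤ ‖x - y‖ / t := by
  have hD : |Metric.infDist x Uᶜ - Metric.infDist y Uᶜ| ≤ ‖x - y‖ := by
    rw [← dist_eq_norm]
    rw [abs_sub_le_iff]
    constructor
    · linarith [Metric.infDist_le_infDist_add_dist (x := x) (y := y) (s := Uᶜ)]
    · rw [dist_comm]
      linarith [Metric.infDist_le_infDist_add_dist (x := y) (y := x) (s := Uᶜ)]
  calc |min 1 (max (Metric.infDist x Uᶜ / t - 1) 0) -
      min 1 (max (Metric.infDist y Uᶜ / t - 1) 0)| ≤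
      max |(1:ℝ) - 1| |max (Metric.infDist x Uᶜ / t - 1) 0 -
        max (Metric.infDist y Uᶜ / t - 1) 0| := abs_min_sub_min_le_max _ _ _ _
    _ = |max (Metric.infDist x Uᶜ / t - 1) 0 - max (Metric.infDist y Uᶜ / t - 1) 0| := by
        simp
    _ ≤ |(Metric.infDist x Uᶜ / t - 1) - (Metric.infDist y Uᶜ / t - 1)| :=
        abs_max_sub_max_le_abs _ _ _
    _ = |Metric.infDist x Uᶜ - Metric.infDist y Uᶜ| / t := by
        have h : (Metric.infDist x Uᶜ / t - 1) - (Metric.infDist y Uᶜ / t - 1) =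
            (Metric.infDist x Uᶜ - Metric.infDist y Uᶜ) / t := by ring
        rw [h, abs_div, abs_of_pos ht]
    _ ≤ ‖x - y‖ / t := by gcongr

/-- The boundary-layer upscaling `ū = φ(d/t) ξ_t + (1 − φ(d/t)) u` of an `L`-Lipschitz
function `u` vanishing outside `U` satisfies `‖u − ū‖_{L^∞(U)} ≤ L t` and is Lipschitz on `U`
with constant at most `4L`. Here `φ(s) = min 1 (max (s−1) 0)` is the piecewise linear cutoff
(`φ = 0` for `s ≤ 1`, `φ = 1` for `s ≥ 2`, `|φ'| ≤ 2`), `d(x) = dist(x, ℝ^d \ U)` and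
`ξ_t(x) = ⨍_{B_t(x)} u`. -/
theorem stmt_8 (d : ℕ) (L t : ℝ) (hL : 0 ≤ L) (ht : 0 < t)
    (U : Set (EuclideanSpace ℝ (Fin d))) (hUo : IsOpen U) (hUc : Uᶜ.Nonempty)
    (u : EuclideanSpace ℝ (Fin d) → ℝ)
    (hu : ∀ x ∈ U, ∀ y ∈ U, |u x - u y| ≤ L * ‖x - y‖)
    (hu0 : ∀ x ∉ U, u x = 0)
    (hucont : Continuous u) :
    (∀ x ∈ U,
      |u x - ((min 1 (max (Metric.infDist x Uᶜ / t - 1) 0)) * (⨍ z in ball x t, u z)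
        + (1 - min 1 (max (Metric.infDist x Uᶜ / t - 1) 0)) * u x)| ≤ L * t) ∧
    (∀ x ∈ U, ∀ y ∈ U,
      |((min 1 (max (Metric.infDist x Uᶜ / t - 1) 0)) * (⨍ z in ball x t, u z)
          + (1 - min 1 (max (Metric.infDist x Uᶜ / t - 1) 0)) * u x)
        - ((min 1 (max (Metric.infDist y Uᶜ / t - 1) 0)) * (⨍ z in ball y t, u z)
          + (1 - min 1 (max (Metric.infDist y Uᶜ / t - 1) 0)) * u y)| ≤
        4 * L * ‖x - y‖) := by
  have hglip : ∀ x y, |u x - u y| ≤ L * ‖x - y‖ := aux_glip hL hUo hu hu0 hucont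
  have hphi0 : ∀ x : EuclideanSpace ℝ (Fin d),
      0 ≤ min 1 (max (Metric.infDist x Uᶜ / t - 1) 0) := fun x =>
    le_min zero_le_one (le_max_right _ _)
  have hphi1 : ∀ x : EuclideanSpace ℝ (Fin d),
      min 1 (max (Metric.infDist x Uᶜ / t - 1) 0) ≤ 1 := fun x => min_le_left _ _
  constructor
  · intro x hx
    set a := min 1 (max (Metric.infDist x Uᶜ / t - 1) 0) with ha
    have hid : u x - (a * (⨍ z in ball x t, u z) + (1 - a) * u x) =
        a * (u x - ⨍ z in ball x t, u z) := by ring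
    rw [hid, abs_mul, abs_of_nonneg (hphi0 x)]
    calc a * |u x - ⨍ z in ball x t, u z| ≤ 1 * (L * t) := by
          apply mul_le_mul (hphi1 x) _ (abs_nonneg _) zero_le_one
          rw [abs_sub_comm]
          exact aux_avg d L t hL ht u hucont hglip x
      _ = L * t := one_mul _
  · intro x hx y hy
    set a := min 1 (max (Metric.infDist x Uᶜ / t - 1) 0) with ha
    set b := min 1 (max (Metric.infDist y Uᶜ / t - 1) 0) with hb
    set p := (⨍ z in ball x t, u z) with hp
    set q := (⨍ z in ball y t, u z) with hq
    have hid : a * p + (1 - a) * u x - (b * q + (1 - b) * u y) =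
        a * (p - q) + (1 - a) * (u x - u y) + (a - b) * (q - u y) := by ring
    rw [hid]
    have t1 : |a * (p - q)| ≤ a * (L * ‖x - y‖) := by
      rw [abs_mul, abs_of_nonneg (hphi0 x)]
      exact mul_le_mul_of_nonneg_left (aux_xi d L t hL ht u hucont hglip x y) (hphi0 x)
    have t2 : |(1 - a) * (u x - u y)| ≤ (1 - a) * (L * ‖x - y‖) := by
      rw [abs_mul, abs_of_nonneg (by linarith [hphi1 x] : (0:ℝ) ≤ 1 - a)]
      exact mul_le_mul_of_nonneg_left (hu x hx y hy) (by linarith [hphi1 x])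
    have t3 : |(a - b) * (q - u y)| ≤ (‖x - y‖ / t) * (L * t) := by
      rw [abs_mul]
      exact mul_le_mul (aux_phi d t ht U x y) (aux_avg d L t hL ht u hucont hglip y)
        (abs_nonneg _) (div_nonneg (norm_nonneg _) ht.le)
    have hsum : a * (L * ‖x - y‖) + (1 - a) * (L * ‖x - y‖) + (‖x - y‖ / t) * (L * t) =
        2 * (L * ‖x - y‖) := by
      field_simp
      ring
    have hLn : 0 ≤ L * ‖x - y‖ := mul_nonneg hL (norm_nonneg _)
    calc |a * (p - q) + (1 - a) * (u x - u y) + (a - b) * (q - u y)| ≤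
        |a * (p - q)| + |(1 - a) * (u x - u y)| + |(a - b) * (q - u y)| :=
          abs_add_three _ _ _
      _ ≤ a * (L * ‖x - y‖) + (1 - a) * (L * ‖x - y‖) + (‖x - y‖ / t) * (L * t) :=
          add_le_add (add_le_add t1 t2) t3
      _ = 2 * (L * ‖x - y‖) := hsum
      _ ≤ 4 * L * ‖x - y‖ := by nlinarith
end

section
/- Let ā be a symmetric positive matrix with Λ^{-1} I ≤ ā ≤ Λ I, and for ν ∈ S^{d−1} set c(ν) = (ν·āν)^{−1/2} and P_ν(x) = c(ν)(x·ν)_+. Suppose for some radius r > 0, unit vectors ν, ν' and ε > 0 we have sup_{x ∈ B_r} |P_ν(x) − P_{ν'}(x)| ≤ ε r. Then 1 − ν·ν' ≤ C(Λ) ε, and hence |ν − ν'| ≤ C(Λ) ε^{1/2}. -/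
open Metric
open scoped RealInnerProductSpace

set_option maxHeartbeats 1600000 in
/-- Comparison of planar one-phase solutions: if the two half-plane solutions
`P_ν(x) = (ν·āν)^{−1/2}(x·ν)_+` and `P_{ν'}` are `εr`-close on `B_r`, then
`1 − ν·ν' ≤ C(Λ) ε` and `|ν − ν'| ≤ C(Λ) ε^{1/2}`. -/
theorem stmt_11 (d : ℕ) (Λ : ℝ) (hΛ : 1 ≤ Λ) :
    ∃ C : ℝ, 0 < C ∧
      ∀ (A : EuclideanSpace ℝ (Fin d) →L[ℝ] EuclideanSpace ℝ (Fin d))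
        (r ε : ℝ) (ν ν' : EuclideanSpace ℝ (Fin d)),
        (∀ ξ η, ⟪A ξ, η⟫ = ⟪ξ, A η⟫) →
        (∀ ξ, Λ⁻¹ * ‖ξ‖ ^ 2 ≤ ⟪A ξ, ξ⟫ ∧ ⟪A ξ, ξ⟫ ≤ Λ * ‖ξ‖ ^ 2) →
        0 < r → 0 ≤ ε → ‖ν‖ = 1 → ‖ν'‖ = 1 →
        (∀ x ∈ ball (0 : EuclideanSpace ℝ (Fin d)) r,
          |(Real.sqrt ⟪ν, A ν⟫)⁻¹ * max ⟪x, ν⟫ 0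
            - (Real.sqrt ⟪ν', A ν'⟫)⁻¹ * max ⟪x, ν'⟫ 0| ≤ ε * r) →
        1 - ⟪ν, ν'⟫ ≤ C * ε ∧ ‖ν - ν'‖ ≤ C * Real.sqrt ε := by
  have hΛ0 : (0:ℝ) < Λ := lt_of_lt_of_le one_pos hΛ
  refine ⟨4 * Λ, by positivity, ?_⟩
  intro A r ε ν ν' hsym hbound hr hε hν hν' hsup
  have habs : |(⟪ν, ν'⟫ : ℝ)| ≤ 1 := by
    simpa [hν, hν'] using abs_real_inner_le_norm ν ν'
  set a : ℝ := ⟪ν, A ν⟫ with ha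
  set a' : ℝ := ⟪ν', A ν'⟫ with ha'
  have ha_lb : Λ⁻¹ ≤ a := by
    have h := (hbound ν).1
    rw [ha, real_inner_comm]
    simpa [hν] using h
  have ha_ub : a ≤ Λ := by
    have h := (hbound ν).2
    rw [ha, real_inner_comm]
    simpa [hν] using h
  have ha'_lb : Λ⁻¹ ≤ a' := by
    have h := (hbound ν').1
    rw [ha', real_inner_comm]
    simpa [hν'] using h
  have ha'_ub : a' ≤ Λ := by
    have h := (hbound ν').2
    rw [ha', real_inner_comm]
    simpa [hν'] using h
  set s : ℝ := Real.sqrt a with hs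
  set s' : ℝ := Real.sqrt a' with hs'
  have hs_pos : 0 < s := Real.sqrt_pos.mpr (lt_of_lt_of_le (inv_pos.mpr hΛ0) ha_lb)
  have hs'_pos : 0 < s' := Real.sqrt_pos.mpr (lt_of_lt_of_le (inv_pos.mpr hΛ0) ha'_lb)
  have hsqrtΛ : Real.sqrt Λ ≤ Λ := by
    nlinarith [Real.sq_sqrt (le_of_lt hΛ0), Real.sqrt_nonneg Λ, sq_nonneg (Real.sqrt Λ - 1)]
  have hsΛ : s ≤ Λ := le_trans (Real.sqrt_le_sqrt ha_ub) hsqrtΛ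
  have hs'Λ : s' ≤ Λ := le_trans (Real.sqrt_le_sqrt ha'_ub) hsqrtΛ
  have hsi_lb : Λ⁻¹ ≤ s⁻¹ := by
    apply inv_anti₀ hs_pos hsΛ
  have hs'i_lb : Λ⁻¹ ≤ s'⁻¹ := by
    apply inv_anti₀ hs'_pos hs'Λ
  have hmem : ∀ w : EuclideanSpace ℝ (Fin d), ‖w‖ = 1 →
      (r / 2) • w ∈ ball (0 : EuclideanSpace ℝ (Fin d)) r := by
    intro w hw
    rw [mem_ball_zero_iff, norm_smul, hw]
    rw [Real.norm_eq_abs, abs_of_pos (by linarith)]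
    linarith
  have hmaxc : ∀ x : ℝ, max ((r/2) * x) 0 = (r/2) * max x 0 := by
    intro x
    rw [mul_max_of_nonneg x 0 (by linarith : (0:ℝ) ≤ r/2), mul_zero]
  have e1 := hsup ((r/2) • ν) (hmem ν hν)
  have e2 := hsup ((r/2) • ν') (hmem ν' hν')
  rw [real_inner_smul_left, real_inner_smul_left, real_inner_self_eq_norm_sq, hν] at e1
  rw [real_inner_smul_left, real_inner_smul_left, real_inner_self_eq_norm_sq, hν'] at e2
  rw [real_inner_comm ν ν'] at e2
  rw [one_pow, mul_one, hmaxc, max_eq_left (by linarith : (0:ℝ) ≤ r/2)] at e1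
  rw [one_pow, mul_one, hmaxc, max_eq_left (by linarith : (0:ℝ) ≤ r/2)] at e2
  set m : ℝ := max (⟪ν, ν'⟫ : ℝ) 0 with hm
  have hm1 : m ≤ 1 := max_le (le_trans (le_abs_self _) habs) (by linarith)
  have hm0 : 0 ≤ m := le_max_right _ _
  -- e1 : |s⁻¹ * (r/2) - s'⁻¹ * ((r/2) * m)| ≤ ε * r
  -- e2 : |s⁻¹ * ((r/2) * m) - s'⁻¹ * (r/2)| ≤ ε * r
  have h1 : |s⁻¹ - s'⁻¹ * m| ≤ 2 * ε := by
    rw [show s⁻¹ * (r/2) - s'⁻¹ * ((r/2) * m) = (s⁻¹ - s'⁻¹ * m) * (r/2) by ring,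
      abs_mul, abs_of_pos (by linarith : (0:ℝ) < r/2)] at e1
    nlinarith [abs_nonneg (s⁻¹ - s'⁻¹ * m)]
  have h2 : |s'⁻¹ - s⁻¹ * m| ≤ 2 * ε := by
    rw [show s⁻¹ * ((r/2) * m) - s'⁻¹ * (r/2) = -((s'⁻¹ - s⁻¹ * m) * (r/2)) by ring,
      abs_neg, abs_mul, abs_of_pos (by linarith : (0:ℝ) < r/2)] at e2
    nlinarith [abs_nonneg (s'⁻¹ - s⁻¹ * m)]
  have hA1 := (abs_le.mp h1).2
  have hA2 := (abs_le.mp h2).2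
  have hsum : 2 * Λ⁻¹ ≤ s⁻¹ + s'⁻¹ := by linarith
  have hkey : 1 - m ≤ 2 * Λ * ε := by
    have e : (s⁻¹ + s'⁻¹) * (1 - m) ≤ 4 * ε := by nlinarith
    have h4 : 2 * Λ⁻¹ * (1 - m) ≤ 4 * ε :=
      le_trans (mul_le_mul_of_nonneg_right hsum (by linarith)) e
    have h5 := mul_le_mul_of_nonneg_left h4 (le_of_lt hΛ0)
    have hinv : Λ * Λ⁻¹ = 1 := mul_inv_cancel₀ (ne_of_gt hΛ0)
    have h6 : Λ * (2 * Λ⁻¹ * (1 - m)) = 2 * (1 - m) := by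
      rw [show Λ * (2 * Λ⁻¹ * (1 - m)) = (Λ * Λ⁻¹) * (2 * (1 - m)) from by ring, hinv, one_mul]
    rw [h6] at h5
    linarith
  have hfirst : 1 - (⟪ν, ν'⟫ : ℝ) ≤ 4 * Λ * ε := by
    rcases le_or_gt 0 (⟪ν, ν'⟫ : ℝ) with h | h
    · rw [hm, max_eq_left h] at hkey
      nlinarith [mul_nonneg (le_of_lt hΛ0) hε]
    · rw [hm, max_eq_right (le_of_lt h)] at hkey
      have : -(⟪ν, ν'⟫ : ℝ) ≤ 1 := by
        have := neg_abs_le (⟪ν, ν'⟫ : ℝ); linarith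
      linarith
  constructor
  · exact hfirst
  · have hsq : ‖ν - ν'‖ ^ 2 = 2 - 2 * ⟪ν, ν'⟫ := by
      rw [norm_sub_sq_real, hν, hν']; ring
    have hsq2 : ‖ν - ν'‖ ^ 2 ≤ (4 * Λ) ^ 2 * ε := by
      rw [hsq]
      have hfc := hfirst
      nlinarith [mul_nonneg (le_of_lt hΛ0) hε, mul_nonneg (mul_nonneg (le_of_lt hΛ0) (le_of_lt hΛ0)) hε]
    calc ‖ν - ν'‖ = Real.sqrt (‖ν - ν'‖ ^ 2) := (Real.sqrt_sq (norm_nonneg _)).symm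
      _ ≤ Real.sqrt ((4 * Λ) ^ 2 * ε) := Real.sqrt_le_sqrt hsq2
      _ = 4 * Λ * Real.sqrt ε := by
          rw [Real.sqrt_mul (sq_nonneg _), Real.sqrt_sq (by positivity)]
end

section
/- Let u: B_r(0) → [0,∞) be L-Lipschitz with u(0) > 0. Suppose δ > 0, c > 0, and there is a sequence x_0 = 0, x_1, x_2, ... in {u > 0} ∩ B_r with u(x_{k+1}) ≥ (1+δ) u(x_k) and |x_{k+1} − x_k| ≤ (c/L) u(x_k) for all k for which x_k ∈ B_r. Then sup_{B_r ∩ {u>0}} u ≥ m r for a constant m > 0 depending only on δ, c, L. -/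
open Metric

/-- Harnack-chain growth: if `u` is `L`-Lipschitz and nonnegative on `B_r`, `u(0) > 0`, and
there is a chain `x_0 = 0, x_1, …` along which `u` grows geometrically
(`u(x_{k+1}) ≥ (1+δ)u(x_k)`) with steps `|x_{k+1} − x_k| ≤ (c/L) u(x_k)` as long as the
chain stays in `B_r`, then `sup_{B_r ∩ {u>0}} u ≥ m r` for an `m > 0` depending only on
`δ, c, L`. -/
theorem stmt_13 (δ c L : ℝ) (hδ : 0 < δ) (hc : 0 < c) (hL : 0 < L) :
    ∃ m : ℝ, 0 < m ∧
      ∀ (d : ℕ) (r : ℝ) (u : EuclideanSpace ℝ (Fin d) → ℝ)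
        (x : ℕ → EuclideanSpace ℝ (Fin d)),
        0 < r →
        (∀ y ∈ ball (0 : EuclideanSpace ℝ (Fin d)) r, 0 ≤ u y) →
        (∀ y ∈ ball (0 : EuclideanSpace ℝ (Fin d)) r,
          ∀ z ∈ ball (0 : EuclideanSpace ℝ (Fin d)) r, |u y - u z| ≤ L * ‖y - z‖) →
        x 0 = 0 → 0 < u 0 →
        (∀ k, x k ∈ ball (0 : EuclideanSpace ℝ (Fin d)) r →
          0 < u (x k) ∧ (1 + δ) * u (x k) ≤ u (x (k + 1)) ∧
            ‖x (k + 1) - x k‖ ≤ (c / L) * u (x k)) →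
        m * r ≤ sSup (u '' (ball (0 : EuclideanSpace ℝ (Fin d)) r ∩ {y | 0 < u y})) := by
  refine ⟨L * δ / (c * (1 + δ)), by positivity, ?_⟩
  intro d r u x hr hnn hlip hx0 hu0 hchain
  set B := ball (0 : EuclideanSpace ℝ (Fin d)) r with hB
  have h0B : (0 : EuclideanSpace ℝ (Fin d)) ∈ B := mem_ball_self hr
  -- Lipschitz bound: u y ≤ u 0 + L * r on B
  have hub : ∀ y ∈ B, u y ≤ u 0 + L * r := by
    intro y hy
    have hl := hlip y hy 0 h0B
    have hnorm : ‖y - 0‖ ≤ r := by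
      rw [sub_zero, ← dist_zero_right]
      exact le_of_lt (mem_ball.mp hy)
    have h1 : u y - u 0 ≤ L * ‖y - 0‖ := (le_abs_self _).trans hl
    nlinarith
  have hbdd : BddAbove (u '' (B ∩ {y | 0 < u y})) := by
    refine ⟨u 0 + L * r, ?_⟩
    rintro _ ⟨y, ⟨hy, _⟩, rfl⟩
    exact hub y hy
  -- geometric growth along the chain (while inside B)
  have grow : ∀ k, (∀ j, j ≤ k → x j ∈ B) → (1 + δ) ^ k * u 0 ≤ u (x k) := by
    intro k
    induction k with
    | zero => intro _; simp [hx0]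
    | succ k ih =>
      intro h
      have hk := hchain k (h k (Nat.le_succ k))
      have hih := ih (fun j hj => h j (hj.trans (Nat.le_succ k)))
      calc (1 + δ) ^ (k + 1) * u 0 = (1 + δ) * ((1 + δ) ^ k * u 0) := by ring
        _ ≤ (1 + δ) * u (x k) := by nlinarith
        _ ≤ u (x (k + 1)) := hk.2.1
  -- step-size bound: total length ≤ K * (last value)
  have chainbd : ∀ n, (∀ j, j ≤ n → x j ∈ B) →
      ‖x (n + 1)‖ ≤ (c / L) * ((1 + δ) / δ) * u (x n) := by
    intro n
    induction n with
    | zero =>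
      intro h
      have hk := hchain 0 (h 0 le_rfl)
      have h1 : ‖x 1 - x 0‖ ≤ (c / L) * u (x 0) := hk.2.2
      rw [hx0, sub_zero] at h1
      have hcl : 0 < c / L := div_pos hc hL
      have h2 : (1 : ℝ) ≤ (1 + δ) / δ := by
        rw [le_div_iff₀ hδ]; linarith
      simp only [hx0, zero_add]
      nlinarith [mul_pos hcl hu0]
    | succ n ih =>
      intro h
      have hprev := ih (fun j hj => h j (hj.trans (Nat.le_succ n)))
      have hk := hchain (n + 1) (h (n + 1) le_rfl)
      have hkn := hchain n (h n (Nat.le_succ n))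
      have hstep : ‖x (n + 1 + 1) - x (n + 1)‖ ≤ (c / L) * u (x (n + 1)) := hk.2.2
      have hgrow : (1 + δ) * u (x n) ≤ u (x (n + 1)) := hkn.2.1
      have htri : ‖x (n + 1 + 1)‖ ≤ ‖x (n + 1)‖ + ‖x (n + 1 + 1) - x (n + 1)‖ := by
        calc ‖x (n + 1 + 1)‖ = ‖x (n + 1) + (x (n + 1 + 1) - x (n + 1))‖ := by
              rw [add_sub_cancel]
          _ ≤ _ := norm_add_le _ _
      have hkey : (c / L) / δ * ((1 + δ) * u (x n)) ≤ (c / L) / δ * u (x (n + 1)) :=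
        mul_le_mul_of_nonneg_left hgrow (by positivity)
      have e1 : (c / L) * ((1 + δ) / δ) * u (x n) = (c / L) / δ * ((1 + δ) * u (x n)) := by
        ring
      have e2 : (c / L) / δ * u (x (n + 1)) + (c / L) * u (x (n + 1))
          = (c / L) * ((1 + δ) / δ) * u (x (n + 1)) := by
        field_simp
      rw [e1] at hprev
      linarith [hprev.trans hkey]
  -- the chain must exit B
  by_cases hall : ∀ k, x k ∈ B
  · exfalso
    obtain ⟨k, hk⟩ := pow_unbounded_of_one_lt ((u 0 + L * r) / u 0)
      (by linarith : (1 : ℝ) < 1 + δ)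
    have hg := grow k (fun j _ => hall j)
    have hb : u (x k) ≤ u 0 + L * r := hub _ (hall k)
    have : u 0 + L * r < (1 + δ) ^ k * u 0 := (div_lt_iff₀ hu0).mp hk
    linarith
  · push_neg at hall
    have hex : ∃ k, x k ∉ B := hall
    classical
    let N := Nat.find hex
    have hN : x N ∉ B := Nat.find_spec hex
    have hmin : ∀ j, j < N → x j ∈ B := fun j hj => by
      by_contra hc'
      exact absurd (Nat.find_le hc') (not_le.mpr hj)
    have hN0 : N ≠ 0 := by
      intro h0
      exact hN (by rw [h0, hx0]; exact h0B)
    obtain ⟨M, hM⟩ := Nat.exists_eq_succ_of_ne_zero hN0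
    have hinside : ∀ j, j ≤ M → x j ∈ B := fun j hj =>
      hmin j (by omega)
    have hbd := chainbd M hinside
    have hrle : r ≤ ‖x (M + 1)‖ := by
      have hnb : x (M + 1) ∉ B := by rw [hM] at hN; exact hN
      have : ¬ dist (x (M + 1)) 0 < r := fun hlt => hnb (mem_ball.mpr hlt)
      rw [dist_zero_right] at this
      linarith [not_lt.mp this]
    have hMB : x M ∈ B := hinside M le_rfl
    have hMpos : 0 < u (x M) := (hchain M hMB).1
    have hmem : u (x M) ∈ u '' (B ∩ {y | 0 < u y}) :=
      ⟨x M, ⟨hMB, hMpos⟩, rfl⟩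
    have key : L * δ / (c * (1 + δ)) * r ≤ u (x M) := by
      have h1 : r ≤ (c / L) * ((1 + δ) / δ) * u (x M) := hrle.trans hbd
      have h2 : L * δ / (c * (1 + δ)) * r
          ≤ L * δ / (c * (1 + δ)) * ((c / L) * ((1 + δ) / δ) * u (x M)) :=
        mul_le_mul_of_nonneg_left h1 (by positivity)
      have h3 : L * δ / (c * (1 + δ)) * ((c / L) * ((1 + δ) / δ) * u (x M)) = u (x M) := by
        field_simp
      linarith [h3 ▸ h2]
    exact key.trans (le_csSup hbdd hmem)
end

section
/- Let u: B_{2r} → [0,∞) be L-Lipschitz with the non-degeneracy property: for every x ∈ ∂{u>0} ∩ B_{2r} and every 0 < ρ ≤ r with B_ρ(x) ⊂ B_{2r}, sup_{B_ρ(x)} u ≥ ℓ ρ. Let 0 < t ≤ r/(10√d) and let (□_i)_{i∈I} be a family of pairwise almost-disjoint closed axis-parallel cubes of side length t, each intersecting ∂{u>0} ∩ B_r. Then each tripled cube 3□_i contains a ball B_i of radius c(d)(ℓ/L) t on which u ≥ c(d) ℓ t, the balls (B_i) have bounded overlap C(d), and consequently #I ≤ C(d) (L/ℓ)^d t^{−d}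 |{0 < u ≤ c(d) L t} ∩ B_{2r}|. -/
open scoped Classical

open MeasureTheory Metric
open scoped ENNReal

lemma euclid_coord_le_dist {d : ℕ} (x y : EuclideanSpace ℝ (Fin d)) (k : Fin d) :
    |x k - y k| ≤ dist x y := by
  rw [EuclideanSpace.dist_eq]
  have h1 : |x k - y k| = Real.sqrt (dist (x k) (y k) ^ 2) := by
    rw [Real.sqrt_sq_eq_abs, Real.dist_eq, abs_abs]
  rw [h1]
  exact Real.sqrt_le_sqrt (Finset.single_le_sum (f := fun i => dist (x i) (y i) ^ 2)
    (fun i _ => sq_nonneg _) (Finset.mem_univ k))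

lemma euclid_dist_le {d : ℕ} (x y : EuclideanSpace ℝ (Fin d)) {a : ℝ} (ha : 0 ≤ a)
    (h : ∀ k, |x k - y k| ≤ a) : dist x y ≤ a * Real.sqrt d := by
  rw [EuclideanSpace.dist_eq]
  have h2 : ∑ i, dist (x i) (y i) ^ 2 ≤ (d : ℝ) * a ^ 2 := by
    calc ∑ i, dist (x i) (y i) ^ 2 ≤ ∑ _i : Fin d, a ^ 2 := by
          apply Finset.sum_le_sum
          intro i _
          rw [Real.dist_eq]
          have := h i
          nlinarith [abs_nonneg (x i - y i)]
      _ = (d : ℝ) * a ^ 2 := by simp [mul_comm]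
  calc Real.sqrt (∑ i, dist (x i) (y i) ^ 2) ≤ Real.sqrt ((d : ℝ) * a ^ 2) :=
        Real.sqrt_le_sqrt h2
    _ = a * Real.sqrt d := by
        rw [Real.sqrt_mul (Nat.cast_nonneg d), Real.sqrt_sq ha, mul_comm]

lemma cube_volume {d : ℕ} (z : EuclideanSpace ℝ (Fin d)) (s : ℝ) :
    volume {x : EuclideanSpace ℝ (Fin d) | ∀ k, |x k - z k| < s} =
      ENNReal.ofReal (2 * s) ^ d := by
  have hmp := EuclideanSpace.volume_preserving_symm_measurableEquiv_toLp (Fin d)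
  have hset : {x : EuclideanSpace ℝ (Fin d) | ∀ k, |x k - z k| < s}
      = (MeasurableEquiv.toLp 2 (Fin d → ℝ)).symm ⁻¹'
        (Set.univ.pi fun k => Set.Ioo (z k - s) (z k + s)) := by
    ext x
    simp only [Set.mem_setOf_eq, Set.mem_preimage, Set.mem_pi, Set.mem_univ, true_implies,
      Set.mem_Ioo, MeasurableEquiv.toLp_symm_apply]
    constructor
    · intro hx k
      have := abs_lt.mp (hx k)
      constructor <;> linarith [this.1, this.2]
    · intro hx k
      rw [abs_lt]
      constructor <;> linarith [(hx k).1, (hx k).2]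
  rw [hset, hmp.measure_preimage
    ((MeasurableSet.univ_pi fun k => measurableSet_Ioo).nullMeasurableSet),
    volume_pi_pi]
  have : ∀ k : Fin d, volume (Set.Ioo (z k - s) (z k + s)) = ENNReal.ofReal (2 * s) := by
    intro k
    rw [Real.volume_Ioo]
    congr 1
    ring
  simp [this]

lemma overlap_count {d : ℕ} {ι : Type} (J : Finset ι) (z : ι → EuclideanSpace ℝ (Fin d))
    {t : ℝ} (ht : 0 < t)
    (hdisj : ∀ i ∈ J, ∀ j ∈ J, i ≠ j →
      Disjoint {x : EuclideanSpace ℝ (Fin d) | ∀ k, |x k - z i k| < t / 2}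
        {x : EuclideanSpace ℝ (Fin d) | ∀ k, |x k - z j k| < t / 2})
    (x : EuclideanSpace ℝ (Fin d)) (hnear : ∀ i ∈ J, ∀ k, |x k - z i k| ≤ 3 * t / 2) :
    (J.card : ℝ) ≤ 4 ^ d := by
  set Q : ι → Set (EuclideanSpace ℝ (Fin d)) :=
    fun i => {w | ∀ k, |w k - z i k| < t / 2} with hQ
  have hQmeas : ∀ i, MeasurableSet (Q i) := by
    intro i
    have : Q i = ⋂ k, {w : EuclideanSpace ℝ (Fin d) | |w k - z i k| < t / 2} := by
      ext w; simp [hQ]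
    rw [this]
    refine MeasurableSet.iInter fun k => ?_
    have hc : Continuous fun w : EuclideanSpace ℝ (Fin d) => |w k - z i k| :=
      (((EuclideanSpace.proj k : EuclideanSpace ℝ (Fin d) →L[ℝ] ℝ).continuous).sub
        continuous_const).abs
    exact measurableSet_lt hc.measurable measurable_const
  have hsub : (⋃ i ∈ J, Q i) ⊆ {w : EuclideanSpace ℝ (Fin d) | ∀ k, |w k - x k| < 2 * t} := by
    intro w hw
    simp only [Set.mem_iUnion] at hw
    obtain ⟨i, hi, hwi⟩ := hw
    intro k
    have h1 := hwi k
    have h2 := hnear i hi k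
    have h3 : |w k - x k| ≤ |w k - z i k| + |z i k - x k| := by
      calc |w k - x k| = |(w k - z i k) + (z i k - x k)| := by ring_nf
        _ ≤ |w k - z i k| + |z i k - x k| := abs_add_le _ _
    have h4 : |z i k - x k| = |x k - z i k| := abs_sub_comm _ _
    simp only [Set.mem_setOf_eq] at h1 ⊢
    linarith
  have hvol : volume (⋃ i ∈ J, Q i) = J.card * ENNReal.ofReal (2 * (t / 2)) ^ d := by
    rw [measure_biUnion_finset (fun i hi j hj hij => hdisj i hi j hj hij) (fun i _ => hQmeas i)]
    simp [hQ, cube_volume, Finset.sum_const, nsmul_eq_mul]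
  have hbig : volume {w : EuclideanSpace ℝ (Fin d) | ∀ k, |w k - x k| < 2 * t}
      = ENNReal.ofReal (2 * (2 * t)) ^ d := cube_volume x (2 * t)
  have hle : (J.card : ℝ≥0∞) * ENNReal.ofReal t ^ d ≤ ENNReal.ofReal (4 * t) ^ d := by
    have := (measure_mono hsub).trans_eq hbig
    rw [hvol] at this
    have e1 : (2 : ℝ) * (t / 2) = t := by ring
    have e2 : (2 : ℝ) * (2 * t) = 4 * t := by ring
    rwa [e1, e2] at this
  have htne : ENNReal.ofReal t ^ d ≠ 0 := by
    simp [ENNReal.ofReal_eq_zero, not_le, ht, pow_ne_zero]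
  have httop : ENNReal.ofReal t ^ d ≠ ⊤ := ENNReal.pow_ne_top ENNReal.ofReal_ne_top
  have h4t : ENNReal.ofReal (4 * t) ^ d = ENNReal.ofReal 4 ^ d * ENNReal.ofReal t ^ d := by
    rw [ENNReal.ofReal_mul (by norm_num), mul_pow]
  rw [h4t] at hle
  have hcard : (J.card : ℝ≥0∞) ≤ ENNReal.ofReal 4 ^ d :=
    (ENNReal.mul_le_mul_iff_left htne httop).mp hle
  have h2 : (J.card : ℝ≥0∞) ≤ ENNReal.ofReal (4 ^ d) := by
    rwa [ENNReal.ofReal_pow (by norm_num)]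
  have h3 := ENNReal.toReal_mono ENNReal.ofReal_ne_top h2
  simpa [ENNReal.toReal_ofReal (by positivity : (0:ℝ) ≤ 4 ^ d)] using h3

set_option maxHeartbeats 1000000

/-- Free boundary covering/counting estimate: if `u` is `L`-Lipschitz and `ℓ`-non-degenerate
on `B_{2r}`, and `(□_i)_{i ∈ I}` is an almost-disjoint family of closed axis-parallel cubes
of side `t ≤ r/(10√d)` each meeting `∂{u>0} ∩ B_r`, then each tripled cube `3□_i` contains
a ball of radius `c(d)(ℓ/L)t` on which `u ≥ c(d)ℓt`, these balls have bounded overlap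
`C(d)`, and consequently
`#I ≤ C(d) (L/ℓ)^d t^{−d} |{0 < u ≤ C(d)Lt} ∩ B_{2r}|`. -/
theorem stmt_18 (d : ℕ) (hd : 1 ≤ d) :
    ∃ c C : ℝ, 0 < c ∧ 1 ≤ C ∧
      ∀ (L ℓ r t : ℝ) (u : EuclideanSpace ℝ (Fin d) → ℝ)
        (ι : Type) (I : Finset ι) (z : ι → EuclideanSpace ℝ (Fin d)),
        0 < ℓ → ℓ ≤ L → 0 < t → t ≤ r / (10 * Real.sqrt d) →
        -- `u` nonnegative and `L`-Lipschitz on `B_{2r}`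
        (∀ x ∈ ball (0 : EuclideanSpace ℝ (Fin d)) (2 * r), 0 ≤ u x) →
        (∀ x ∈ ball (0 : EuclideanSpace ℝ (Fin d)) (2 * r),
          ∀ y ∈ ball (0 : EuclideanSpace ℝ (Fin d)) (2 * r), |u x - u y| ≤ L * ‖x - y‖) →
        -- `ℓ`-non-degeneracy at the free boundary
        (∀ x ∈ frontier {y : EuclideanSpace ℝ (Fin d) | 0 < u y},
          x ∈ ball (0 : EuclideanSpace ℝ (Fin d)) (2 * r) →
          ∀ ρ, 0 < ρ → ρ ≤ r → ball x ρ ⊆ ball (0 : EuclideanSpace ℝ (Fin d)) (2 * r) →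
          ∃ y ∈ ball x ρ, ℓ * ρ ≤ u y) →
        -- the cubes are pairwise almost disjoint (disjoint interiors)
        (∀ i ∈ I, ∀ j ∈ I, i ≠ j →
          Disjoint {x : EuclideanSpace ℝ (Fin d) | ∀ k, |x k - z i k| < t / 2}
            {x : EuclideanSpace ℝ (Fin d) | ∀ k, |x k - z j k| < t / 2}) →
        -- each cube meets `∂{u>0} ∩ B_r`
        (∀ i ∈ I, ∃ x, x ∈ frontier {y : EuclideanSpace ℝ (Fin d) | 0 < u y} ∧
          x ∈ ball (0 : EuclideanSpace ℝ (Fin d)) r ∧ ∀ k, |x k - z i k| ≤ t / 2) →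
        ∃ y : ι → EuclideanSpace ℝ (Fin d),
          (∀ i ∈ I,
            closedBall (y i) (c * (ℓ / L) * t) ⊆
              {x : EuclideanSpace ℝ (Fin d) | ∀ k, |x k - z i k| ≤ 3 * t / 2} ∧
            ∀ x ∈ closedBall (y i) (c * (ℓ / L) * t), c * ℓ * t ≤ u x) ∧
          (∀ x : EuclideanSpace ℝ (Fin d),
            ((I.filter fun i => x ∈ closedBall (y i) (c * (ℓ / L) * t)).card : ℝ) ≤ C) ∧
          (I.card : ℝ) ≤ C * (L / ℓ) ^ d * t ^ (-(d : ℝ)) *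
            (volume {x ∈ ball (0 : EuclideanSpace ℝ (Fin d)) (2 * r) |
              0 < u x ∧ u x ≤ C * L * t}).toReal := by
  
  have hd1 : (1 : ℝ) ≤ d := by exact_mod_cast hd
  have hsd : (1 : ℝ) ≤ Real.sqrt d := by
    rw [show (1:ℝ) = Real.sqrt 1 by simp]
    exact Real.sqrt_le_sqrt hd1
  have hC1 : (1 : ℝ) ≤ (8 * Real.sqrt d) ^ d := by
    apply one_le_pow₀
    nlinarith
  refine ⟨1/4, (8 * Real.sqrt d) ^ d, by norm_num, hC1, ?_⟩
  intro L ℓ r t u ι I z hl hlL ht htr hnn hlip hnd hdisj hmeet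
  have hL : 0 < L := lt_of_lt_of_le hl hlL
  have hsd0 : (0 : ℝ) < Real.sqrt d := by linarith
  have h10 : (0 : ℝ) < 10 * Real.sqrt d := by positivity
  have hW : t * (10 * Real.sqrt d) ≤ r := (le_div_iff₀ h10).mp htr
  have hr : 0 < r := lt_of_lt_of_le (by positivity) hW
  have ht_r : t ≤ r := by nlinarith
  set ρ : ℝ := 1/4 * (ℓ / L) * t with hρdef
  have hρpos : 0 < ρ := by positivity
  have hρt : ρ ≤ t / 4 := by
    have hdiv : ℓ / L ≤ 1 := (div_le_one hL).mpr hlL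
    rw [hρdef]
    nlinarith
  -- Step A: for each cube, find a good ball center
  have key : ∀ i ∈ I, ∃ y' : EuclideanSpace ℝ (Fin d),
      ∀ x ∈ closedBall y' ρ, (∀ k, |x k - z i k| ≤ 3 * t / 2) ∧
        1/4 * ℓ * t ≤ u x ∧ u x ≤ L * t ∧
        x ∈ ball (0 : EuclideanSpace ℝ (Fin d)) (2 * r) := by
    intro i hi
    obtain ⟨x0, hx0f, hx0b, hx0c⟩ := hmeet i hi
    rw [mem_ball] at hx0b
    have hx0_2r : x0 ∈ ball (0 : EuclideanSpace ℝ (Fin d)) (2 * r) := by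
      rw [mem_ball]; linarith
    -- u x0 = 0
    have hux0 : u x0 = 0 := by
      have h1 : 0 ≤ u x0 := hnn x0 hx0_2r
      by_contra h
      have hpos : 0 < u x0 := lt_of_le_of_ne h1 (Ne.symm h)
      set ε := min r (u x0 / (2 * L)) with hε
      have hε0 : 0 < ε := lt_min hr (by positivity)
      have hεr : ε ≤ r := min_le_left _ _
      have hεu : ε ≤ u x0 / (2 * L) := min_le_right _ _
      have hcl : x0 ∈ closure {y : EuclideanSpace ℝ (Fin d) | 0 < u y}ᶜ := by
        rw [closure_compl]
        exact hx0f.2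
      rw [Metric.mem_closure_iff] at hcl
      obtain ⟨w, hw, hwd⟩ := hcl ε hε0
      have hw2r : w ∈ ball (0 : EuclideanSpace ℝ (Fin d)) (2 * r) := by
        rw [mem_ball]
        have htri := dist_triangle w x0 0
        rw [dist_comm x0 w] at hwd
        linarith
      have huw : u w = 0 := by
        have hwle : u w ≤ 0 := le_of_not_gt hw
        exact le_antisymm hwle (hnn w hw2r)
      have hl2 := hlip x0 hx0_2r w hw2r
      rw [huw, sub_zero] at hl2
      have hnorm : ‖x0 - w‖ = dist x0 w := (dist_eq_norm _ _).symm
      rw [hnorm] at hl2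
      have habs : u x0 ≤ |u x0| := le_abs_self _
      have hdn : (0:ℝ) ≤ dist x0 w := dist_nonneg
      have : u x0 ≤ L * ε := by nlinarith [mul_le_mul_of_nonneg_left hwd.le hL.le]
      have : L * ε ≤ u x0 / 2 := by
        have := mul_le_mul_of_nonneg_left hεu hL.le
        calc L * ε ≤ L * (u x0 / (2 * L)) := this
          _ = u x0 / 2 := by field_simp
      linarith
    -- nondegeneracy ball
    have hball : ball x0 (t / 2) ⊆ ball (0 : EuclideanSpace ℝ (Fin d)) (2 * r) := by
      intro w hw
      rw [mem_ball] at hw ⊢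
      have := dist_triangle w x0 0
      linarith
    obtain ⟨y', hy'ball, hy'u⟩ :=
      hnd x0 hx0f hx0_2r (t / 2) (by positivity) (by linarith) hball
    rw [mem_ball] at hy'ball
    refine ⟨y', fun x hx => ?_⟩
    rw [mem_closedBall] at hx
    have hy2r : y' ∈ ball (0 : EuclideanSpace ℝ (Fin d)) (2 * r) :=
      hball (by rw [mem_ball]; exact hy'ball)
    have hdxx0 : dist x x0 ≤ 3 * t / 4 := by
      have := dist_triangle x y' x0
      linarith
    have hx2r : x ∈ ball (0 : EuclideanSpace ℝ (Fin d)) (2 * r) := by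
      rw [mem_ball]
      have := dist_triangle x x0 0
      linarith
    refine ⟨?_, ?_, ?_, hx2r⟩
    · intro k
      have h1 : |x k - y' k| ≤ ρ := (euclid_coord_le_dist x y' k).trans hx
      have h2 : |y' k - x0 k| ≤ t / 2 := (euclid_coord_le_dist y' x0 k).trans hy'ball.le
      have h3 := hx0c k
      have h4 : |x k - z i k| ≤ |x k - y' k| + |y' k - x0 k| + |x0 k - z i k| := by
        calc |x k - z i k| = |(x k - y' k) + (y' k - x0 k) + (x0 k - z i k)| := by ring_nf
          _ ≤ |(x k - y' k) + (y' k - x0 k)| + |x0 k - z i k| := abs_add_le _ _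
          _ ≤ |x k - y' k| + |y' k - x0 k| + |x0 k - z i k| := by
              linarith [abs_add_le (x k - y' k) (y' k - x0 k)]
      linarith
    · -- lower bound
      have hl2 := hlip x hx2r y' hy2r
      have hnorm : ‖x - y'‖ = dist x y' := (dist_eq_norm _ _).symm
      rw [hnorm] at hl2
      have hLρ : L * ρ = 1/4 * ℓ * t := by
        rw [hρdef]; field_simp
      have h5 : |u x - u y'| ≤ L * ρ := by
        calc |u x - u y'| ≤ L * dist x y' := hl2
          _ ≤ L * ρ := mul_le_mul_of_nonneg_left hx hL.le
      have h6 := (abs_le.mp h5).1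
      have h7 : ℓ * (t / 2) ≤ u y' := hy'u
      rw [hLρ] at h6
      linarith
    · -- upper bound
      have hl2 := hlip x hx2r x0 hx0_2r
      rw [hux0, sub_zero] at hl2
      have hnorm : ‖x - x0‖ = dist x x0 := (dist_eq_norm _ _).symm
      rw [hnorm] at hl2
      have habs : u x ≤ |u x| := le_abs_self _
      nlinarith [mul_le_mul_of_nonneg_left hdxx0 hL.le]
  -- Step B: choose centers
  set Y : ι → EuclideanSpace ℝ (Fin d) :=
    fun i => if h : i ∈ I then (key i h).choose else z i with hYdef
  have hY : ∀ i ∈ I, ∀ x ∈ closedBall (Y i) ρ, (∀ k, |x k - z i k| ≤ 3 * t / 2) ∧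
      1/4 * ℓ * t ≤ u x ∧ u x ≤ L * t ∧
      x ∈ ball (0 : EuclideanSpace ℝ (Fin d)) (2 * r) := by
    intro i hi
    have hYi : Y i = (key i hi).choose := by rw [hYdef]; exact dif_pos hi
    rw [hYi]
    exact (key i hi).choose_spec
  have hcount : ∀ x : EuclideanSpace ℝ (Fin d),
      ((I.filter fun i => x ∈ closedBall (Y i) ρ).card : ℝ) ≤ 4 ^ d := by
    intro x
    refine overlap_count _ z ht ?_ x ?_
    · intro i hi j hj hij
      exact hdisj i (Finset.mem_filter.mp hi).1 j (Finset.mem_filter.mp hj).1 hij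
    · intro i hi k
      exact (hY i (Finset.mem_filter.mp hi).1 x (Finset.mem_filter.mp hi).2).1 k
  have hC4 : (4:ℝ) ^ d ≤ (8 * Real.sqrt d) ^ d := by
    apply pow_le_pow_left₀ (by norm_num)
    linarith
  refine ⟨Y, ?_, ?_, ?_⟩
  · intro i hi
    exact ⟨fun x hx => (hY i hi x hx).1, fun x hx => (hY i hi x hx).2.1⟩
  · intro x
    exact (hcount x).trans hC4
  · -- the measure estimate
    set S := {x ∈ ball (0 : EuclideanSpace ℝ (Fin d)) (2 * r) |
      0 < u x ∧ u x ≤ (8 * Real.sqrt d) ^ d * L * t} with hSdef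
    set a : ℝ := ρ / Real.sqrt d with hadef
    have ha : 0 < a := by positivity
    have hsc : ∀ i, {w : EuclideanSpace ℝ (Fin d) | ∀ k, |w k - Y i k| < a}
        ⊆ closedBall (Y i) ρ := by
      intro i w hw
      rw [mem_closedBall]
      calc dist w (Y i) ≤ a * Real.sqrt d :=
            euclid_dist_le w (Y i) ha.le (fun k => (hw k).le)
        _ = ρ := by rw [hadef, div_mul_cancel₀ _ (ne_of_gt hsd0)]
    have hvB : ∀ i ∈ I, ENNReal.ofReal (2 * a) ^ d ≤ volume (closedBall (Y i) ρ) := by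
      intro i hi
      rw [← cube_volume (Y i) a]
      exact measure_mono (hsc i)
    have hBS : ∀ i ∈ I, closedBall (Y i) ρ ⊆ S := by
      intro i hi x hx
      obtain ⟨_, hlow, hup, hb⟩ := hY i hi x hx
      have h0 : (0:ℝ) < 1/4 * ℓ * t := by positivity
      have hLt : 0 < L * t := by positivity
      refine ⟨hb, by linarith, ?_⟩
      nlinarith [hC1]
    have hmain : (I.card : ℝ≥0∞) * ENNReal.ofReal (2 * a) ^ d
        ≤ ENNReal.ofReal (4 ^ d) * volume S := by
      calc (I.card : ℝ≥0∞) * ENNReal.ofReal (2 * a) ^ d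
          = ∑ _i ∈ I, ENNReal.ofReal (2 * a) ^ d := by
            rw [Finset.sum_const, nsmul_eq_mul]
        _ ≤ ∑ i ∈ I, volume (closedBall (Y i) ρ) := Finset.sum_le_sum hvB
        _ = ∑ i ∈ I, ∫⁻ x, (closedBall (Y i) ρ).indicator (fun _ => (1:ℝ≥0∞)) x := by
            refine Finset.sum_congr rfl fun i _ => ?_
            exact (lintegral_indicator_one measurableSet_closedBall).symm
        _ = ∫⁻ x, ∑ i ∈ I, (closedBall (Y i) ρ).indicator (fun _ => (1:ℝ≥0∞)) x :=
            (lintegral_finset_sum _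
              (fun i _ => measurable_const.indicator measurableSet_closedBall)).symm
        _ ≤ ∫⁻ x, S.indicator (fun _ => ENNReal.ofReal (4 ^ d)) x := by
            refine lintegral_mono fun x => ?_
            by_cases hxS : x ∈ S
            · rw [Set.indicator_of_mem hxS]
              have hsum : ∑ i ∈ I, (closedBall (Y i) ρ).indicator (fun _ => (1:ℝ≥0∞)) x
                  = ((I.filter fun i => x ∈ closedBall (Y i) ρ).card : ℝ≥0∞) := by
                rw [Finset.card_filter, Nat.cast_sum]
                refine Finset.sum_congr rfl fun i _ => ?_
                by_cases h : x ∈ closedBall (Y i) ρ <;> simp [h]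
              rw [hsum, ← ENNReal.ofReal_natCast]
              exact ENNReal.ofReal_le_ofReal (hcount x)
            · rw [Set.indicator_of_notMem hxS]
              refine le_of_eq (Finset.sum_eq_zero fun i hi => ?_)
              exact Set.indicator_of_notMem (fun hx => hxS (hBS i hi hx)) _
        _ ≤ ENNReal.ofReal (4 ^ d) * volume S := lintegral_indicator_const_le _ _
    have hStop : volume S ≠ ⊤ := by
      have h1 : volume S ≤ volume (ball (0 : EuclideanSpace ℝ (Fin d)) (2 * r)) :=
        measure_mono (Set.sep_subset _ _)
      exact ne_top_of_le_ne_top measure_ball_lt_top.ne h1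
    have h2a : (0:ℝ) < 2 * a := by positivity
    have hR : (I.card : ℝ) * (2 * a) ^ d ≤ 4 ^ d * (volume S).toReal := by
      have hne : ENNReal.ofReal (4 ^ d) * volume S ≠ ⊤ :=
        ENNReal.mul_ne_top ENNReal.ofReal_ne_top hStop
      have h3 := ENNReal.toReal_mono hne hmain
      simpa [ENNReal.toReal_mul, ENNReal.toReal_pow, ENNReal.toReal_ofReal h2a.le, ENNReal.toReal_ofReal ha.le,
        ENNReal.toReal_ofReal (by positivity : (0:ℝ) ≤ 4 ^ d)] using h3
    have hrpow : t ^ (-(d:ℝ)) = ((t:ℝ) ^ d)⁻¹ := by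
      rw [Real.rpow_neg ht.le, Real.rpow_natCast]
    rw [hrpow]
    have heq : (8 * Real.sqrt d) ^ d * (L / ℓ) ^ d * (((t:ℝ) ^ d)⁻¹)
        = 4 ^ d / (2 * a) ^ d := by
      rw [← inv_pow, ← mul_pow, ← mul_pow, ← div_pow]
      congr 1
      rw [hadef, hρdef]
      field_simp
      ring
    rw [heq, div_mul_eq_mul_div, le_div_iff₀ (pow_pos h2a d)]
    linarith [hR]
end
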